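/- Let a, b, h, r be real numbers with 5b − a ≠ 0 and r² = 6bh/(5b−a). Then f21(r, 0) = 0, f22(r, 0) = 0, f21(r, π) = 0 and f22(r, π) = 0. -/

import Mathlib

/-- The first component of the second-order averaged function of the harmonic
oscillator perturbed by the quintic potential `(a/5)x⁵ + bx³y²` at energy `h`. -/
noncomputable def f21 (a b h r α : ℝ) : ℝ :=
  (1 / 320) * b * r ^ 3 * (r ^ 2 - 2 * h) * Real.sin (2 * α) *
    (-240 * b * h + (-49 * a + 50 * b) * r ^ 2 +
      90 * b * (r ^ 2 - 2 * h) * Real.cos (2 * α))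

/-- The second component of the second-order averaged function of the harmonic
oscillator perturbed by the quintic potential `(a/5)x⁵ + bx³y²` at energy `h`. -/
noncomputable def f22 (a b h r α : ℝ) : ℝ :=
  (1 / 160) * r ^ 2 *
    (564 * b ^ 2 * h ^ 2 + 420 * a * b * h * r ^ 2 - 678 * b ^ 2 * h * r ^ 2 +
      63 * a ^ 2 * r ^ 4 - 280 * a * b * r ^ 4 + 170 * b ^ 2 * r ^ 4 +
      b * (49 * a * r ^ 2 * (3 * h - 2 * r ^ 2) +
        10 * b * (48 * h ^ 2 - 51 * h * r ^ 2 + 10 * r ^ 4)) * Real.cos (2 * α) +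
      45 * b ^ 2 * (2 * h ^ 2 - 3 * h * r ^ 2 + r ^ 4) * Real.cos (4 * α))


section AtMultiplesOfPi

variable {a b h r α : ℝ}

theorem sin_two_mul_eq_zero_of_cos_two_mul_eq_one (hα : Real.cos (2 * α) = 1) :
    Real.sin (2 * α) = 0 := by
  nlinarith [Real.sin_sq_add_cos_sq (2 * α)]

theorem cos_four_mul_eq_one_of_cos_two_mul_eq_one (hα : Real.cos (2 * α) = 1) :
    Real.cos (4 * α) = 1 := by
  rw [show 4 * α = 2 * (2 * α) by ring, Real.cos_two_mul, hα]
  norm_num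

theorem f21_eq_zero_of_cos_two_mul_eq_one (hα : Real.cos (2 * α) = 1) :
    f21 a b h r α = 0 := by
  simp [f21, sin_two_mul_eq_zero_of_cos_two_mul_eq_one hα]

theorem f22_eq_of_cos_two_mul_eq_one (hα : Real.cos (2 * α) = 1) :
    f22 a b h r α =
      63 / 160 * r ^ 2 * ((b - a) * r ^ 2 - 3 * b * h) * ((5 * b - a) * r ^ 2 - 6 * b * h) := by
  rw [f22, hα, cos_four_mul_eq_one_of_cos_two_mul_eq_one hα]
  ring

end AtMultiplesOfPi

/-- If `r² = 6bh/(5b−a)`, then `(r, 0)` and `(r, π)` are zeros of `(f21, f22)`. -/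
theorem zero_of_type_three (a b h r : ℝ) (hba : 5 * b - a ≠ 0)
    (hr : r ^ 2 = 6 * b * h / (5 * b - a)) :
    f21 a b h r 0 = 0 ∧ f22 a b h r 0 = 0 ∧
    f21 a b h r Real.pi = 0 ∧ f22 a b h r Real.pi = 0 := by
  have hcrit : (5 * b - a) * r ^ 2 - 6 * b * h = 0 := by
    rw [hr, mul_div_cancel₀ _ hba, sub_self]
  have hcos0 : Real.cos (2 * 0) = 1 := by simp
  have hcosπ : Real.cos (2 * Real.pi) = 1 := Real.cos_two_pi
  refine ⟨f21_eq_zero_of_cos_two_mul_eq_one hcos0, ?_,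
    f21_eq_zero_of_cos_two_mul_eq_one hcosπ, ?_⟩
  · rw [f22_eq_of_cos_two_mul_eq_one hcos0, hcrit, mul_zero]
  · rw [f22_eq_of_cos_two_mul_eq_one hcosπ, hcrit, mul_zero]
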